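/- Let A, B, X be self-adjoint bounded operators on H with A + B positive and invertible. Then the block operator [[A, X],[X, B]] on H ⊕ H is positive if and only if ‖(B+A)^{-1/2}(B − A + 2iX)(B+A)^{-1/2}‖ ≤ 1. -/

import Mathlib

open ContinuousLinearMap

variable {H : Type*} [NormedAddCommGroup H] [InnerProductSpace ℂ H] [CompleteSpace H]

/-- The 2×2 block operator `[[A, X],[Y, B]]` acting on the Hilbert space `H ⊕ H`
(realized as `WithLp 2 (H × H)`). -/
noncomputable def blockOperator (A X Y B : H →L[ℂ] H) :
    WithLp 2 (H × H) →L[ℂ] WithLp 2 (H × H) :=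
  (WithLp.prodContinuousLinearEquiv 2 ℂ H H).symm.toContinuousLinearMap ∘L
    ((A ∘L ContinuousLinearMap.fst ℂ H H + X ∘L ContinuousLinearMap.snd ℂ H H).prod
      (Y ∘L ContinuousLinearMap.fst ℂ H H + B ∘L ContinuousLinearMap.snd ℂ H H)) ∘L
    (WithLp.prodContinuousLinearEquiv 2 ℂ H H).toContinuousLinearMap

/-!
Substituting `z = (p + q, i (p - q))`, a bijection of `H ⊕ H`, turns the quadratic form of
`[[A, X], [X, B]]` into `⟪(A + B) p, p⟫ + ⟪(A + B) q, q⟫ - 2 Re ⟪p, (B - A + 2iX) q⟫`.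
Writing further `p = R u`, `q = R v` with `R = (B + A)^{-1/2}`, it becomes
`‖u‖² + ‖v‖² - 2 Re ⟪u, D v⟫` with `D = R (B - A + 2iX) R`, and this is nonnegative for all
`u, v` exactly when `‖D‖ ≤ 1`.
-/

open scoped InnerProductSpace

section

variable {𝕜 E F : Type*} [RCLike 𝕜] [NormedAddCommGroup E] [InnerProductSpace 𝕜 E]
  [NormedAddCommGroup F] [InnerProductSpace 𝕜 F]

theorem ContinuousLinearMap.norm_le_one_iff_two_mul_re_inner_le (D : E →L[𝕜] F) :
    ‖D‖ ≤ 1 ↔ ∀ u v, 2 * RCLike.re ⟪u, D v⟫_𝕜 ≤ ‖u‖ ^ 2 + ‖v‖ ^ 2 := by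
  refine ⟨fun hD u v ↦ ?_, fun h ↦ D.opNorm_le_bound zero_le_one fun v ↦ ?_⟩
  · have hDv : ‖D v‖ ≤ ‖v‖ := by simpa using D.le_of_opNorm_le hD v
    calc 2 * RCLike.re ⟪u, D v⟫_𝕜 ≤ 2 * (‖u‖ * ‖v‖) := by
          gcongr
          exact (re_inner_le_norm u (D v)).trans (by gcongr)
      _ ≤ ‖u‖ ^ 2 + ‖v‖ ^ 2 := by linarith [two_mul_le_add_sq ‖u‖ ‖v‖]
  · have h := h (D v) v
    rw [inner_self_eq_norm_sq] at h
    rw [one_mul, ← sq_le_sq₀ (norm_nonneg _) (norm_nonneg _)]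
    linarith

end

theorem ContinuousLinearMap.isPositive_iff_of_surjective {E ι : Type*} [NormedAddCommGroup E]
    [InnerProductSpace ℂ E] (T : E →L[ℂ] E) {φ : ι → E} (hφ : Function.Surjective φ) {f : ι → ℝ}
    (h : ∀ i, ⟪T (φ i), φ i⟫_ℂ = f i) : T.IsPositive ↔ ∀ i, 0 ≤ f i := by
  simp [isPositive_iff_complex, hφ.forall, h]

theorem surjective_toLp_add_I_smul_sub {E : Type*} [AddCommGroup E] [Module ℂ E] {R : E → E}
    (hR : Function.Surjective R) :
    Function.Surjective fun w : E × E ↦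
      WithLp.toLp 2 (R w.1 + R w.2, Complex.I • (R w.1 - R w.2)) := by
  rintro ⟨x, y⟩
  obtain ⟨u, hu⟩ := hR ((2 : ℂ)⁻¹ • (x - Complex.I • y))
  obtain ⟨v, hv⟩ := hR ((2 : ℂ)⁻¹ • (x + Complex.I • y))
  refine ⟨(u, v), ?_⟩
  simp only [hu, hv]
  congr 1
  ext
  · module
  · linear_combination (norm := module) Complex.I_sq • (-y)

theorem blockOperator_toLp {E : Type*} [NormedAddCommGroup E] [InnerProductSpace ℂ E]
    (A X Y B : E →L[ℂ] E) (x y : E) :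
    blockOperator A X Y B (WithLp.toLp 2 (x, y)) = WithLp.toLp 2 (A x + X y, Y x + B y) :=
  rfl

section

variable {A B X : H →L[ℂ] H}

theorem inner_blockOperator_toLp_add_I_smul_sub (hA : IsSelfAdjoint A) (hB : IsSelfAdjoint B)
    (hX : IsSelfAdjoint X) (p q : H) :
    ⟪blockOperator A X X B (WithLp.toLp 2 (p + q, Complex.I • (p - q))),
        WithLp.toLp 2 (p + q, Complex.I • (p - q))⟫_ℂ =
      ⟪(B + A) p, p⟫_ℂ + ⟪(B + A) q, q⟫_ℂ -
        (⟪p, (B - A + (2 * Complex.I) • X) q⟫_ℂ + ⟪(B - A + (2 * Complex.I) • X) q, p⟫_ℂ) := by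
  simp only [blockOperator_toLp, WithLp.prod_inner_apply, map_add, map_sub, map_smul, add_apply,
    sub_apply, smul_apply, inner_add_left, inner_add_right, inner_sub_left, inner_sub_right,
    inner_smul_left, inner_smul_right, Complex.conj_I, map_mul, map_ofNat]
  -- the `Complex.I_sq` term is `⟪B (i w), i w⟫ = ⟪B w, w⟫` for `w = p - q`
  linear_combination hA.isSymmetric p q - hB.isSymmetric p q - 2 * Complex.I * hX.isSymmetric p q
    + (⟪B p, q⟫_ℂ + ⟪B q, p⟫_ℂ - ⟪B p, p⟫_ℂ - ⟪B q, q⟫_ℂ) * Complex.I_sq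

theorem inner_blockOperator_toLp_eq_ofReal (hA : IsSelfAdjoint A) (hB : IsSelfAdjoint B)
    (hX : IsSelfAdjoint X) {R : H →L[ℂ] H} (hR : IsSelfAdjoint R) (hRR : R ∘L (B + A) ∘L R = 1)
    (u v : H) :
    ⟪blockOperator A X X B (WithLp.toLp 2 (R u + R v, Complex.I • (R u - R v))),
        WithLp.toLp 2 (R u + R v, Complex.I • (R u - R v))⟫_ℂ =
      ((‖u‖ ^ 2 + ‖v‖ ^ 2 - 2 * (⟪u, (R ∘L (B - A + (2 * Complex.I) • X) ∘L R) v⟫_ℂ).re : ℝ)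
        : ℂ) := by
  have sandwich (T : H →L[ℂ] H) (x y : H) : ⟪R x, T (R y)⟫_ℂ = ⟪x, (R ∘L T ∘L R) y⟫_ℂ :=
    hR.isSymmetric x (T (R y))
  have diag (x : H) : ⟪(B + A) (R x), R x⟫_ℂ = ⟪x, x⟫_ℂ := by
    rw [← inner_conj_symm, sandwich, hRR, one_apply_eq_self, inner_conj_symm]
  rw [inner_blockOperator_toLp_add_I_smul_sub hA hB hX, diag, diag, ← inner_conj_symm _ (R u),
    sandwich, Complex.add_conj, inner_self_eq_norm_sq_to_K, inner_self_eq_norm_sq_to_K]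
  simp only [Complex.ofReal_sub, Complex.ofReal_add, Complex.ofReal_pow]
  -- the `RCLike` and `Complex` coercions `ℝ → ℂ` agree only up to unfolding
  rfl

end

theorem blockOperator_isPositive_iff_norm_le_one_general
    (A B X S R : H →L[ℂ] H)
    (hA : IsSelfAdjoint A) (hB : IsSelfAdjoint B) (hX : IsSelfAdjoint X)
    (hS : S.IsPositive) (hS2 : S ∘L S = B + A)
    (hR₁ : S ∘L R = 1) (hR₂ : R ∘L S = 1) :
    (blockOperator A X X B).IsPositive ↔
      ‖R ∘L (B - A + (2 * Complex.I) • X) ∘L R‖ ≤ 1 := by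
  have hR : IsSelfAdjoint R := by
    let _ : Invertible S := ⟨R, hR₂, hR₁⟩
    exact hS.isSelfAdjoint.invOf
  have hRR : R ∘L (B + A) ∘L R = 1 := by
    calc R ∘L (B + A) ∘L R = (R ∘L S) ∘L (S ∘L R) := by rw [← hS2]; rfl
      _ = 1 := by rw [hR₂, hR₁]; rfl
  rw [isPositive_iff_of_surjective _ (surjective_toLp_add_I_smul_sub fun x ↦ ⟨S x, congr($hR₂ x)⟩)
    (fun w ↦ inner_blockOperator_toLp_eq_ofReal hA hB hX hR hRR w.1 w.2),
    norm_le_one_iff_two_mul_re_inner_le]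
  simp only [Prod.forall, sub_nonneg, RCLike.re_to_complex]

/-- For self-adjoint `A, B, X` with `A + B` positive and invertible:
`[[A, X],[X, B]] ≥ 0` iff `‖(B+A)^{-1/2} (B − A + 2iX) (B+A)^{-1/2}‖ ≤ 1`,
where `(B+A)^{-1/2}` is the operator `R` inverse to the positive square root `S`
of `B + A`. -/
theorem blockOperator_isPositive_iff_norm_le_one
    (A B X S R : H →L[ℂ] H)
    (hA : IsSelfAdjoint A) (hB : IsSelfAdjoint B) (hX : IsSelfAdjoint X)
    (hAB : (A + B).IsPositive) (hABinv : ∃ T : H →L[ℂ] H, (A + B) ∘L T = 1 ∧ T ∘L (A + B) = 1)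
    (hS : S.IsPositive) (hS2 : S ∘L S = B + A)
    (hR₁ : S ∘L R = 1) (hR₂ : R ∘L S = 1) :
    (blockOperator A X X B).IsPositive ↔
      ‖R ∘L (B - A + (2 * Complex.I) • X) ∘L R‖ ≤ 1 :=
  blockOperator_isPositive_iff_norm_le_one_general A B X S R hA hB hX hS hS2 hR₁ hR₂
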